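/- arXiv:1804.05569 — 2 statements merged into one kernel-verified Lean document; each statement's English description precedes it below -/
import Mathlib

section
/- Let λ be a nonnegative random variable, λ_Th ≥ 0, P_peak > 0, P_x = P_peak·1{λ ≥ λ_Th}, and let P_z be any random variable with 0 ≤ P_z ≤ P_peak a.s. and E[P_z] ≤ E[P_x]. Then E[λ·P_z] ≤ E[λ·P_x]; i.e., the threshold policy maximizes expected weighted received power among all policies with the same or smaller average transmit power. -/
/-!
Pointwise, `(λ - λ_Th) (P_z - P_x) ≤ 0`: above the threshold `P_x` is at its peak, so `P_z ≤ P_x`,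
and below it `P_x = 0 ≤ P_z`. Integrating, `E[λ (P_z - P_x)] ≤ λ_Th E[P_z - P_x] ≤ 0`.
-/

open MeasureTheory

lemma sub_mul_sub_ite_nonpos {l t z peak : ℝ} (hz0 : 0 ≤ z) (hzpeak : z ≤ peak) :
    (l - t) * (z - if t ≤ l then peak else 0) ≤ 0 := by
  split_ifs with h
  · exact mul_nonpos_of_nonneg_of_nonpos (sub_nonneg.mpr h) (sub_nonpos.mpr hzpeak)
  · rw [sub_zero]
    exact mul_nonpos_of_nonpos_of_nonneg (sub_nonpos.mpr (not_le.mp h).le) hz0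

lemma integral_mul_le_integral_mul_of_sub_mul_sub_nonpos {Ω : Type*} [MeasurableSpace Ω]
    {μ : Measure Ω} {lam f g : Ω → ℝ} {t : ℝ} (ht : 0 ≤ t)
    (hsign : ∀ᵐ ω ∂μ, (lam ω - t) * (f ω - g ω) ≤ 0)
    (hf : Integrable f μ) (hg : Integrable g μ)
    (hlamf : Integrable (fun ω => lam ω * f ω) μ) (hlamg : Integrable (fun ω => lam ω * g ω) μ)
    (hfg : ∫ ω, f ω ∂μ ≤ ∫ ω, g ω ∂μ) :
    ∫ ω, lam ω * f ω ∂μ ≤ ∫ ω, lam ω * g ω ∂μ := by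
  have hdiff : ∫ ω, lam ω * f ω ∂μ - ∫ ω, lam ω * g ω ∂μ ≤
      t * (∫ ω, f ω ∂μ - ∫ ω, g ω ∂μ) :=
    calc ∫ ω, lam ω * f ω ∂μ - ∫ ω, lam ω * g ω ∂μ
        = ∫ ω, (lam ω * f ω - lam ω * g ω) ∂μ := (integral_sub hlamf hlamg).symm
      _ ≤ ∫ ω, (t * f ω - t * g ω) ∂μ := by
        refine integral_mono_ae (hlamf.sub hlamg) ((hf.const_mul t).sub (hg.const_mul t)) ?_
        filter_upwards [hsign] with ω hω
        linarith
      _ = t * (∫ ω, f ω ∂μ - ∫ ω, g ω ∂μ) := by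
        rw [integral_sub (hf.const_mul t) (hg.const_mul t), integral_const_mul,
          integral_const_mul, mul_sub]
  linarith [mul_nonpos_of_nonneg_of_nonpos ht (sub_nonpos.mpr hfg)]

theorem threshold_policy_optimality_general {Ω : Type*} [MeasurableSpace Ω]
    (μ : Measure Ω)
    (lam Pz Px : Ω → ℝ) (lamTh Ppeak : ℝ)
    (hlamTh : 0 ≤ lamTh)
    (hPz0 : ∀ ω, 0 ≤ Pz ω) (hPzpeak : ∀ ω, Pz ω ≤ Ppeak)
    (hPx : Px = fun ω => if lamTh ≤ lam ω then Ppeak else 0)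
    (hintPz : Integrable Pz μ) (hintPx : Integrable Px μ)
    (hintlamPz : Integrable (fun ω => lam ω * Pz ω) μ)
    (hintlamPx : Integrable (fun ω => lam ω * Px ω) μ)
    (hle : ∫ ω, Pz ω ∂μ ≤ ∫ ω, Px ω ∂μ) :
    ∫ ω, lam ω * Pz ω ∂μ ≤ ∫ ω, lam ω * Px ω ∂μ := by
  refine integral_mul_le_integral_mul_of_sub_mul_sub_nonpos hlamTh
    (Filter.Eventually.of_forall fun ω => ?_) hintPz hintPx hintlamPz hintlamPx hle
  subst hPx
  exact sub_mul_sub_ite_nonpos (hPz0 ω) (hPzpeak ω)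

/-- The threshold policy `Px = P_peak·1{λ ≥ λ_Th}` maximizes the expected
channel-weighted received power among all policies `Pz` with
`0 ≤ Pz ≤ P_peak` and average transmit power at most that of `Px`. -/
theorem threshold_policy_optimality {Ω : Type*} [MeasurableSpace Ω]
    (μ : Measure Ω) [IsProbabilityMeasure μ]
    (lam Pz Px : Ω → ℝ) (lamTh Ppeak : ℝ)
    (hlamTh : 0 ≤ lamTh) (hPpeak : 0 < Ppeak)
    (hlam : ∀ ω, 0 ≤ lam ω)
    (hPz0 : ∀ ω, 0 ≤ Pz ω) (hPzpeak : ∀ ω, Pz ω ≤ Ppeak)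
    (hPx : Px = fun ω => if lamTh ≤ lam ω then Ppeak else 0)
    (hintPz : Integrable Pz μ) (hintPx : Integrable Px μ)
    (hintlamPz : Integrable (fun ω => lam ω * Pz ω) μ)
    (hintlamPx : Integrable (fun ω => lam ω * Px ω) μ)
    (hle : ∫ ω, Pz ω ∂μ ≤ ∫ ω, Px ω ∂μ) :
    ∫ ω, lam ω * Pz ω ∂μ ≤ ∫ ω, lam ω * Px ω ∂μ :=
  threshold_policy_optimality_general μ lam Pz Px lamTh Ppeak hlamTh hPz0 hPzpeak hPx hintPz hintPx
    hintlamPz hintlamPx hle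
end

section
/- Let λ ≥ 0 be a random variable, P_peak > 0, λ_Th ≥ 0, and P_x = P_peak·1{λ ≥ λ_Th} with E[P_x] = P_avg. For any random variable P_z with 0 ≤ P_z ≤ P_peak and E[P_z] ≤ P_avg, we have E[λ·P_z] − E[λ·P_x] ≤ λ_Th·(E[P_z] − E[P_x]) ≤ 0. -/
open MeasureTheory

/-!
Pointwise, `(λ - λ_Th) (P_z - P_x) ≤ 0`: where `λ ≥ λ_Th` the threshold policy transmits at
full power, so `P_z - P_x ≤ 0`; elsewhere it is silent, so `P_z - P_x ≥ 0`. Integrating this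
gives the first inequality, and the second is `λ_Th ≥ 0` together with `E[P_z] ≤ E[P_x]`.
-/

lemma threshold_sub_mul_sub_nonpos {l t z p : ℝ} (hz0 : 0 ≤ z) (hzp : z ≤ p) :
    (l - t) * (z - if t ≤ l then p else 0) ≤ 0 := by
  split_ifs with h
  · exact mul_nonpos_of_nonneg_of_nonpos (sub_nonneg.2 h) (sub_nonpos.2 hzp)
  · exact mul_nonpos_of_nonpos_of_nonneg (sub_nonpos.2 (not_le.1 h).le) (by simpa using hz0)

lemma integral_mul_sub_integral_mul_le {Ω : Type*} [MeasurableSpace Ω] {μ : Measure Ω}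
    {lam f g : Ω → ℝ} (c : ℝ) (hf : Integrable f μ) (hg : Integrable g μ)
    (hlf : Integrable (fun ω => lam ω * f ω) μ) (hlg : Integrable (fun ω => lam ω * g ω) μ)
    (h : ∀ᵐ ω ∂μ, (lam ω - c) * (f ω - g ω) ≤ 0) :
    (∫ ω, lam ω * f ω ∂μ) - (∫ ω, lam ω * g ω ∂μ) ≤ c * ((∫ ω, f ω ∂μ) - (∫ ω, g ω ∂μ)) := by
  have hmono : ∫ ω, (lam ω * f ω - lam ω * g ω) ∂μ ≤ ∫ ω, (c * f ω - c * g ω) ∂μ :=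
    integral_mono_ae (hlf.sub hlg) ((hf.const_mul c).sub (hg.const_mul c))
      (h.mono fun ω hω => by linarith)
  rwa [integral_sub hlf hlg, integral_sub (hf.const_mul c) (hg.const_mul c),
    integral_const_mul, integral_const_mul, ← mul_sub] at hmono

theorem threshold_policy_comparison_general {Ω : Type*} [MeasurableSpace Ω]
    (μ : Measure Ω)
    (lam Pz Px : Ω → ℝ) (lamTh Ppeak Pavg : ℝ)
    (hlamTh : 0 ≤ lamTh)
    (hPx : Px = fun ω => if lamTh ≤ lam ω then Ppeak else 0)
    (hPxavg : ∫ ω, Px ω ∂μ = Pavg)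
    (hPz0 : ∀ ω, 0 ≤ Pz ω) (hPzpeak : ∀ ω, Pz ω ≤ Ppeak)
    (hintPz : Integrable Pz μ) (hintPx : Integrable Px μ)
    (hintlamPz : Integrable (fun ω => lam ω * Pz ω) μ)
    (hintlamPx : Integrable (fun ω => lam ω * Px ω) μ)
    (hle : ∫ ω, Pz ω ∂μ ≤ Pavg) :
    (∫ ω, lam ω * Pz ω ∂μ) - (∫ ω, lam ω * Px ω ∂μ) ≤
        lamTh * ((∫ ω, Pz ω ∂μ) - (∫ ω, Px ω ∂μ)) ∧
      lamTh * ((∫ ω, Pz ω ∂μ) - (∫ ω, Px ω ∂μ)) ≤ 0 := by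
  refine ⟨integral_mul_sub_integral_mul_le lamTh hintPz hintPx hintlamPz hintlamPx
    (Filter.Eventually.of_forall fun ω => ?_), ?_⟩
  · rw [hPx]
    exact threshold_sub_mul_sub_nonpos (hPz0 ω) (hPzpeak ω)
  · exact mul_nonpos_of_nonneg_of_nonpos hlamTh (by linarith)

/-- Key comparison inequality for the power-limited case: for any competing
policy `Pz` with `0 ≤ Pz ≤ P_peak` and `E[Pz] ≤ P_avg = E[Px]`,
`E[λPz] − E[λPx] ≤ λ_Th(E[Pz] − E[Px]) ≤ 0`. -/
theorem threshold_policy_comparison {Ω : Type*} [MeasurableSpace Ω]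
    (μ : Measure Ω) [IsProbabilityMeasure μ]
    (lam Pz Px : Ω → ℝ) (lamTh Ppeak Pavg : ℝ)
    (hlamTh : 0 ≤ lamTh) (hPpeak : 0 < Ppeak)
    (hlam : ∀ ω, 0 ≤ lam ω)
    (hPx : Px = fun ω => if lamTh ≤ lam ω then Ppeak else 0)
    (hPxavg : ∫ ω, Px ω ∂μ = Pavg)
    (hPz0 : ∀ ω, 0 ≤ Pz ω) (hPzpeak : ∀ ω, Pz ω ≤ Ppeak)
    (hintPz : Integrable Pz μ) (hintPx : Integrable Px μ)
    (hintlamPz : Integrable (fun ω => lam ω * Pz ω) μ)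
    (hintlamPx : Integrable (fun ω => lam ω * Px ω) μ)
    (hle : ∫ ω, Pz ω ∂μ ≤ Pavg) :
    (∫ ω, lam ω * Pz ω ∂μ) - (∫ ω, lam ω * Px ω ∂μ) ≤
        lamTh * ((∫ ω, Pz ω ∂μ) - (∫ ω, Px ω ∂μ)) ∧
      lamTh * ((∫ ω, Pz ω ∂μ) - (∫ ω, Px ω ∂μ)) ≤ 0 :=
  threshold_policy_comparison_general μ lam Pz Px lamTh Ppeak Pavg hlamTh hPx hPxavg hPz0 hPzpeak
    hintPz hintPx hintlamPz hintlamPx hle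
end
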